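/- arXiv:2202.11520 — 2 statements merged into one kernel-verified Lean document; each statement's English description precedes it below -/
import Mathlib

section
/- Let A, B ∈ M₂(ℂ) with tr(A) = 0. Then for every real q, ‖AB − qBA‖_F² ≤ (1 + q²)‖A‖_F²‖B‖_F². -/
/-!
For square matrices, ‖[A,B]_q‖² + ‖[Aᴴ,B]_{-q}‖² = tr(Bᴴ(AᴴA + AAᴴ)B) + q² tr((AᴴA + AAᴴ)BᴴB):
the cross terms cancel by cyclicity of the trace. A traceless 2 × 2 matrix satisfies
AᴴA + AAᴴ = ‖A‖² I, so the right-hand side is (1 + q²)‖A‖²‖B‖², and the bound follows by dropping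
the second square on the left.
-/

open Matrix
open scoped BigOperators Matrix

noncomputable def frobSq (M : Matrix (Fin 2) (Fin 2) ℂ) : ℝ :=
  ∑ i, ∑ j, ‖M i j‖ ^ 2

namespace Matrix

variable {n R : Type*} [Fintype n] [CommRing R] [StarRing R]

def qCommutator (q : R) (A B : Matrix n n R) : Matrix n n R :=
  A * B - q • (B * A)

theorem trace_qCommutator_add_trace_qCommutator_neg_conjTranspose (A B : Matrix n n R) {q : R}
    (hq : star q = q) :
    ((qCommutator q A B)ᴴ * qCommutator q A B).trace
        + ((qCommutator (-q) Aᴴ B)ᴴ * qCommutator (-q) Aᴴ B).trace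
      = (Bᴴ * (Aᴴ * A + A * Aᴴ) * B).trace + q ^ 2 * ((Aᴴ * A + A * Aᴴ) * (Bᴴ * B)).trace := by
  simp only [qCommutator, conjTranspose_sub, conjTranspose_add, conjTranspose_smul,
    conjTranspose_mul, conjTranspose_conjTranspose, hq, neg_smul, sub_neg_eq_add,
    Matrix.mul_sub, Matrix.sub_mul, Matrix.mul_add, Matrix.add_mul, Matrix.mul_smul,
    Matrix.smul_mul, trace_add, trace_sub, trace_smul, smul_eq_mul, Matrix.mul_assoc]
  have h₁ : (Aᴴ * (Bᴴ * (A * B))).trace = (Bᴴ * (A * (B * Aᴴ))).trace := by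
    simpa only [Matrix.mul_assoc] using trace_mul_comm Aᴴ (Bᴴ * A * B)
  have h₂ : (Bᴴ * (Aᴴ * (B * A))).trace = (A * (Bᴴ * (Aᴴ * B))).trace := by
    simpa only [Matrix.mul_assoc] using trace_mul_comm (Bᴴ * Aᴴ * B) A
  have h₃ : (Aᴴ * (Bᴴ * (B * A))).trace = (A * (Aᴴ * (Bᴴ * B))).trace := by
    simpa only [Matrix.mul_assoc] using trace_mul_comm (Aᴴ * Bᴴ * B) A
  have h₄ : (A * (Bᴴ * (B * Aᴴ))).trace = (Aᴴ * (A * (Bᴴ * B))).trace := by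
    simpa only [Matrix.mul_assoc] using trace_mul_comm (A * Bᴴ * B) Aᴴ
  linear_combination -q * h₁ - q * h₂ + q ^ 2 * h₃ + q ^ 2 * h₄

theorem conjTranspose_mul_self_add_mul_conjTranspose_self_of_trace_eq_zero
    {A : Matrix (Fin 2) (Fin 2) R} (hA : A.trace = 0) :
    Aᴴ * A + A * Aᴴ = (Aᴴ * A).trace • (1 : Matrix (Fin 2) (Fin 2) R) := by
  have h₁₁ : A 1 1 = -A 0 0 := by
    rw [trace_fin_two] at hA
    linear_combination hA
  ext i j
  fin_cases i <;> fin_cases j <;>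
    simp only [Fin.zero_eta, Fin.mk_one, Matrix.add_apply, Matrix.smul_apply, mul_apply,
      Fin.sum_univ_two, trace_fin_two, conjTranspose_apply, h₁₁, star_neg, one_apply_eq,
      one_apply_ne, ne_eq, zero_ne_one, one_ne_zero, not_false_eq_true, smul_eq_mul, mul_one,
      mul_zero] <;>
    ring

end Matrix

theorem ofReal_frobSq (M : Matrix (Fin 2) (Fin 2) ℂ) : (frobSq M : ℂ) = (Mᴴ * M).trace := by
  simp only [frobSq, trace, diag_apply, mul_apply, conjTranspose_apply, RCLike.star_def,
    Complex.conj_mul', Fin.sum_univ_two]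
  push_cast
  ring

theorem frobSq_nonneg (M : Matrix (Fin 2) (Fin 2) ℂ) : 0 ≤ frobSq M := by
  unfold frobSq; positivity

theorem frobSq_qCommutator_add_frobSq_qCommutator_neg_conjTranspose
    {A : Matrix (Fin 2) (Fin 2) ℂ} (hA : A.trace = 0) (B : Matrix (Fin 2) (Fin 2) ℂ) (q : ℝ) :
    frobSq (qCommutator (q : ℂ) A B) + frobSq (qCommutator (-q : ℂ) Aᴴ B)
      = (1 + q ^ 2) * frobSq A * frobSq B := by
  apply Complex.ofReal_injective
  push_cast
  rw [ofReal_frobSq, ofReal_frobSq, ofReal_frobSq, ofReal_frobSq,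
    trace_qCommutator_add_trace_qCommutator_neg_conjTranspose A B (Complex.conj_ofReal q),
    conjTranspose_mul_self_add_mul_conjTranspose_self_of_trace_eq_zero hA]
  simp only [Matrix.mul_smul, Matrix.smul_mul, Matrix.mul_one, Matrix.one_mul, trace_smul,
    smul_eq_mul, ← Matrix.mul_assoc]
  ring

theorem stmt_11 (A B : Matrix (Fin 2) (Fin 2) ℂ) (hA : A.trace = 0) (q : ℝ) :
    frobSq (A * B - (q : ℂ) • (B * A)) ≤ (1 + q ^ 2) * frobSq A * frobSq B := by
  change frobSq (qCommutator (q : ℂ) A B) ≤ _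
  linarith [frobSq_qCommutator_add_frobSq_qCommutator_neg_conjTranspose hA B q,
    frobSq_nonneg (qCommutator (-q : ℂ) Aᴴ B)]
end

section
/- For n ≥ 2 let A = B = diag(n−1, −1, …, −1) ∈ M_n(ℝ) (traceless). Then for any q ∈ ℝ, ‖AB − qBA‖_F²/(‖A‖_F²‖B‖_F²) = g(n)(1−q)² where g(n) = (n² − 3n + 3)/(n(n−1)); in particular ‖A‖_F² = n(n−1) and ‖AB‖_F² = n(n−1)(n² − 3n + 3). -/
open Matrix
open scoped BigOperators Matrix

noncomputable def frobSqR {n : ℕ} (M : Matrix (Fin n) (Fin n) ℝ) : ℝ :=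
  ∑ i, ∑ j, ‖M i j‖ ^ 2

noncomputable def g (n : ℕ) : ℝ :=
  ((n : ℝ) ^ 2 - 3 * n + 3) / ((n : ℝ) * (n - 1))

lemma frob_diag {n : ℕ} (d : Fin n → ℝ) :
    frobSqR (Matrix.diagonal d) = ∑ i, d i ^ 2 := by
  unfold frobSqR
  refine Finset.sum_congr rfl fun i _ => ?_
  rw [Finset.sum_eq_single i]
  · simp [Real.norm_eq_abs, sq_abs]
  · intro j _ hj; simp [Matrix.diagonal_apply_ne d hj.symm]
  · simp

lemma sum_ite_fin {n : ℕ} (hn : 1 ≤ n) (a b : ℝ) :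
    ∑ i : Fin n, (if (i : ℕ) = 0 then a else b) = a + ((n : ℝ) - 1) * b := by
  have h0 : (0 : ℕ) < n := hn
  have : ∀ i : Fin n, (if (i : ℕ) = 0 then a else b)
      = b + (if i = (⟨0, h0⟩ : Fin n) then a - b else 0) := by
    intro i
    by_cases h : (i : ℕ) = 0
    · have : i = (⟨0, h0⟩ : Fin n) := Fin.ext h
      simp [h, this]
    · have : i ≠ (⟨0, h0⟩ : Fin n) := fun he => h (by simp [he])
      simp [h, this]
  rw [Finset.sum_congr rfl fun i _ => this i, Finset.sum_add_distrib,
    Finset.sum_ite_eq' Finset.univ]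
  simp [Finset.card_univ]
  ring

lemma frob_smul {n : ℕ} (c : ℝ) (M : Matrix (Fin n) (Fin n) ℝ) :
    frobSqR (c • M) = c ^ 2 * frobSqR M := by
  unfold frobSqR
  simp [Matrix.smul_apply, norm_mul, mul_pow, Finset.mul_sum, Real.norm_eq_abs, sq_abs]

theorem stmt_18 {n : ℕ} (hn : 2 ≤ n)
    (A : Matrix (Fin n) (Fin n) ℝ)
    (hA : A = Matrix.diagonal fun i : Fin n =>
      if (i : ℕ) = 0 then ((n : ℝ) - 1) else -1) :
    A.trace = 0 ∧
    frobSqR A = (n : ℝ) * (n - 1) ∧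
    frobSqR (A * A) = (n : ℝ) * (n - 1) * ((n : ℝ) ^ 2 - 3 * n + 3) ∧
    ∀ q : ℝ, frobSqR (A * A - q • (A * A)) / (frobSqR A * frobSqR A) =
      g n * (1 - q) ^ 2 := by
  have hn1 : 1 ≤ n := le_trans (by norm_num) hn
  have hnR : (2 : ℝ) ≤ (n : ℝ) := by exact_mod_cast hn
  have hnpos : (0 : ℝ) < (n : ℝ) * ((n : ℝ) - 1) :=
    mul_pos (by linarith) (by linarith)
  have htrace : A.trace = 0 := by
    rw [hA, Matrix.trace_diagonal, sum_ite_fin hn1]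
    ring
  have hfA : frobSqR A = (n : ℝ) * ((n : ℝ) - 1) := by
    rw [hA, frob_diag]
    have : ∀ i : Fin n, (if (i : ℕ) = 0 then ((n : ℝ) - 1) else -1) ^ 2
        = (if (i : ℕ) = 0 then ((n : ℝ) - 1) ^ 2 else 1) := by
      intro i; split <;> ring
    rw [Finset.sum_congr rfl fun i _ => this i, sum_ite_fin hn1]
    ring
  have hA2 : A * A = Matrix.diagonal fun i : Fin n =>
      if (i : ℕ) = 0 then ((n : ℝ) - 1) ^ 2 else 1 := by
    rw [hA, Matrix.diagonal_mul_diagonal]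
    have : (fun i : Fin n => (if (i : ℕ) = 0 then ((n : ℝ) - 1) else -1)
        * (if (i : ℕ) = 0 then ((n : ℝ) - 1) else -1))
        = fun i : Fin n => if (i : ℕ) = 0 then ((n : ℝ) - 1) ^ 2 else 1 := by
      funext i; split <;> ring
    rw [this]
  have hfA2 : frobSqR (A * A) = (n : ℝ) * ((n : ℝ) - 1) * ((n : ℝ) ^ 2 - 3 * n + 3) := by
    rw [hA2, frob_diag]
    have : ∀ i : Fin n, (if (i : ℕ) = 0 then ((n : ℝ) - 1) ^ 2 else 1) ^ 2
        = (if (i : ℕ) = 0 then ((n : ℝ) - 1) ^ 4 else 1) := by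
      intro i; split <;> ring
    rw [Finset.sum_congr rfl fun i _ => this i, sum_ite_fin hn1]
    ring
  refine ⟨htrace, hfA, hfA2, fun q => ?_⟩
  have hsub : A * A - q • (A * A) = (1 - q) • (A * A) := by
    rw [sub_smul, one_smul]
  rw [hsub, frob_smul, hfA2, hfA, g]
  field_simp
end
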